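/- arXiv:1904.04601 — 7 statements merged into one kernel-verified Lean document; each statement's English description precedes it below -/
import Mathlib

section
/- For every graph G and every integer n > 1, the product of the maximum number of pairwise G-creating Hamiltonian paths of K_n and the maximum number of pairwise non-G-creating Hamiltonian paths of K_n is at most n!/2. -/
/-- `A` is contained in `B` as a (not necessarily induced) subgraph. -/
def containsCopy {α β : Type*} (A : SimpleGraph α) (B : SimpleGraph β) : Prop :=
  ∃ f : α ↪ β, ∀ u v, A.Adj u v → B.Adj (f u) (f v)

/-- `H` is (the edge graph of) a Hamiltonian path of the complete graph on `Fin n`. -/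
def IsHamPath {n : ℕ} (H : SimpleGraph (Fin n)) : Prop :=
  ∃ f : Equiv.Perm (Fin n), ∀ u v, H.Adj u v ↔
    ∃ i j : Fin n, (j : ℕ) = (i : ℕ) + 1 ∧ ((u = f i ∧ v = f j) ∨ (u = f j ∧ v = f i))

/-- The maximum number of pairwise `G`-creating Hamiltonian paths of `K_n`. -/
noncomputable def Hmax {β : Type*} (n : ℕ) (G : SimpleGraph β) : ℕ :=
  sSup {k | ∃ F : Finset (SimpleGraph (Fin n)), (∀ H ∈ F, IsHamPath H) ∧
    (∀ H₁ ∈ F, ∀ H₂ ∈ F, H₁ ≠ H₂ → containsCopy G (H₁ ⊔ H₂)) ∧ F.card = k}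

/-- The maximum number of pairwise non-`G`-creating Hamiltonian paths of `K_n`. -/
noncomputable def Hbarmax {β : Type*} (n : ℕ) (G : SimpleGraph β) : ℕ :=
  sSup {k | ∃ F : Finset (SimpleGraph (Fin n)), (∀ H ∈ F, IsHamPath H) ∧
    (∀ H₁ ∈ F, ∀ H₂ ∈ F, H₁ ≠ H₂ → ¬ containsCopy G (H₁ ⊔ H₂)) ∧ F.card = k}

/-!
A permutation `σ` of the vertices that carries a path `H` of a pairwise `G`-creating family `F`
onto a path `H'` of a pairwise non-`G`-creating family `F'` determines the pair `(H, H')`: if it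
also carried `K ∈ F` onto `K' ∈ F'` with `K ≠ H`, then `H' ∪ K'`, the image of `H ∪ K`, would
contain `G`, so `H' = K'` and then `H = K` after all. Since a Hamiltonian path has the two
automorphisms `id` and reversal, each pair is hit by at least two permutations, whence
`2 |F| |F'| ≤ n!`.
-/

open Finset SimpleGraph

theorem card_mul_card_mul_le_card_of_le_card_transporter {Γ X : Type*} [Fintype Γ]
    [DecidableEq X] (act : Γ → X → X) (hact : ∀ g, Function.Injective (act g))
    (P : X → X → Prop) (hP : ∀ g x y, P x y → P (act g x) (act g y))
    {F F' : Finset X} (hF : ∀ x ∈ F, ∀ y ∈ F, x ≠ y → P x y)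
    (hF' : ∀ x ∈ F', ∀ y ∈ F', x ≠ y → ¬ P x y) {k : ℕ}
    (hk : ∀ x ∈ F, ∀ y ∈ F', k ≤ #{g | act g x = y}) :
    #F * #F' * k ≤ Fintype.card Γ := by
  classical
  set T : X × X → Finset Γ := fun p => {g | act g p.1 = p.2}
  have hdisj : ((F ×ˢ F' : Finset (X × X)) : Set (X × X)).PairwiseDisjoint T := by
    rintro ⟨x₁, y₁⟩ hp₁ ⟨x₂, y₂⟩ hp₂ hne
    obtain ⟨hx₁, hy₁⟩ := mem_product.1 hp₁
    obtain ⟨hx₂, hy₂⟩ := mem_product.1 hp₂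
    refine disjoint_left.2 fun g hg₁ hg₂ => hne ?_
    simp only [T, mem_filter, mem_univ, true_and] at hg₁ hg₂
    have hy : y₁ = y₂ := by
      by_contra hy
      have hx : x₁ ≠ x₂ := by rintro rfl; exact hy (hg₁.symm.trans hg₂)
      exact hF' y₁ hy₁ y₂ hy₂ hy (hg₁ ▸ hg₂ ▸ hP g x₁ x₂ (hF x₁ hx₁ x₂ hx₂ hx))
    have hx : x₁ = x₂ := hact g (hg₁.trans (hy.trans hg₂.symm))
    rw [hx, hy]
  calc #F * #F' * k = ∑ _p ∈ F ×ˢ F', k := by rw [sum_const, card_product, smul_eq_mul]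
    _ ≤ ∑ p ∈ F ×ˢ F', #(T p) :=
      sum_le_sum fun p hp => hk p.1 (mem_product.1 hp).1 p.2 (mem_product.1 hp).2
    _ = #((F ×ˢ F').biUnion T) := (card_biUnion hdisj).symm
    _ ≤ Fintype.card Γ := card_le_univ _

theorem SimpleGraph.map_sup {V W : Type*} (f : V → W) (A B : SimpleGraph V) :
    (A ⊔ B).map f = A.map f ⊔ B.map f := by
  ext u v
  simp only [map_adj', sup_adj]
  grind

theorem containsCopy.map {α V W : Type*} {A : SimpleGraph α} {B : SimpleGraph V}
    (h : containsCopy A B) (e : V ↪ W) : containsCopy A (B.map e) := by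
  obtain ⟨f, hf⟩ := h
  exact ⟨f.trans e, fun u v huv => (map_adj _ _ _ _).2 ⟨_, _, hf u v huv, rfl, rfl⟩⟩

theorem card_stabilizer_le_card_transporter {V : Type*} [Fintype V] [DecidableEq V]
    [DecidableEq (SimpleGraph V)] (P : SimpleGraph V) (f f' : Equiv.Perm V) :
    #{a : Equiv.Perm V | P.map a = P} ≤ #{σ : Equiv.Perm V | (P.map f).map σ = P.map f'} := by
  refine card_le_card_of_injOn (fun a => f' * a * f⁻¹) (fun a ha => ?_) fun a _ b _ hab => ?_
  · simp only [coe_filter, mem_univ, true_and, Set.mem_ofPred_eq] at ha ⊢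
    rw [SimpleGraph.map_map, ← Equiv.Perm.coe_mul, inv_mul_cancel_right, Equiv.Perm.coe_mul,
      ← SimpleGraph.map_map, ha]
  · simpa using hab

theorem isHamPath_iff_exists_eq_map_pathGraph {n : ℕ} {H : SimpleGraph (Fin n)} :
    IsHamPath H ↔ ∃ f : Equiv.Perm (Fin n), H = (pathGraph n).map f := by
  refine exists_congr fun f => ?_
  simp only [SimpleGraph.ext_iff, funext_iff, eq_iff_iff]
  refine forall₂_congr fun u v => iff_congr Iff.rfl ?_
  rw [← Equiv.coe_toEmbedding, map_adj]
  simp only [pathGraph_adj, Equiv.coe_toEmbedding]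
  constructor
  · rintro ⟨i, j, hij, ⟨rfl, rfl⟩ | ⟨rfl, rfl⟩⟩
    · exact ⟨i, j, Or.inl hij.symm, rfl, rfl⟩
    · exact ⟨j, i, Or.inr hij.symm, rfl, rfl⟩
  · rintro ⟨a, b, hab | hab, rfl, rfl⟩
    · exact ⟨a, b, hab.symm, Or.inl ⟨rfl, rfl⟩⟩
    · exact ⟨b, a, hab.symm, Or.inr ⟨rfl, rfl⟩⟩

theorem pathGraph_map_revPerm (n : ℕ) : (pathGraph n).map Fin.revPerm = pathGraph n := by
  ext u v
  rw [← Equiv.coe_toEmbedding, map_adj]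
  simp only [pathGraph_adj, Equiv.coe_toEmbedding, Fin.revPerm_apply]
  constructor
  · rintro ⟨a, b, hab, rfl, rfl⟩
    simp only [Fin.val_rev]
    omega
  · intro h
    refine ⟨u.rev, v.rev, ?_, Fin.rev_rev u, Fin.rev_rev v⟩
    simp only [Fin.val_rev]
    omega

theorem two_le_card_stabilizer_pathGraph {n : ℕ} (hn : 1 < n)
    [DecidableEq (SimpleGraph (Fin n))] :
    2 ≤ #{a : Equiv.Perm (Fin n) | (pathGraph n).map a = pathGraph n} := by
  have hrev : Fin.revPerm ≠ (1 : Equiv.Perm (Fin n)) := by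
    intro h
    have := congrArg Fin.val (Equiv.ext_iff.1 h ⟨0, by omega⟩)
    simp only [Fin.revPerm_apply, Fin.val_rev, zero_add, Equiv.Perm.coe_one, id_eq] at this
    omega
  refine one_lt_card.2 ⟨Fin.revPerm, ?_, 1, ?_, hrev⟩ <;> simp [pathGraph_map_revPerm]

theorem two_le_card_transporter_of_isHamPath {n : ℕ} (hn : 1 < n)
    [DecidableEq (SimpleGraph (Fin n))] {H H' : SimpleGraph (Fin n)} (hH : IsHamPath H)
    (hH' : IsHamPath H') : 2 ≤ #{σ : Equiv.Perm (Fin n) | H.map σ = H'} := by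
  obtain ⟨f, rfl⟩ := isHamPath_iff_exists_eq_map_pathGraph.1 hH
  obtain ⟨f', rfl⟩ := isHamPath_iff_exists_eq_map_pathGraph.1 hH'
  exact (two_le_card_stabilizer_pathGraph hn).trans (card_stabilizer_le_card_transporter _ f f')

theorem exists_card_eq_sSup_card {α : Type*} [Fintype α] (p : Finset α → Prop) (h : p ∅) :
    ∃ F, p F ∧ #F = sSup {k | ∃ F, p F ∧ #F = k} :=
  Nat.sSup_mem (s := {k | ∃ F, p F ∧ #F = k}) ⟨0, ∅, h, rfl⟩
    ⟨Fintype.card α, by rintro _ ⟨F, -, rfl⟩; exact card_le_univ F⟩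

theorem exists_card_eq_Hmax {β : Type*} (n : ℕ) (G : SimpleGraph β) :
    ∃ F : Finset (SimpleGraph (Fin n)), (∀ H ∈ F, IsHamPath H) ∧
      (∀ H₁ ∈ F, ∀ H₂ ∈ F, H₁ ≠ H₂ → containsCopy G (H₁ ⊔ H₂)) ∧ #F = Hmax n G := by
  simp_rw [Hmax, ← and_assoc]
  exact exists_card_eq_sSup_card _ (by simp)

theorem exists_card_eq_Hbarmax {β : Type*} (n : ℕ) (G : SimpleGraph β) :
    ∃ F : Finset (SimpleGraph (Fin n)), (∀ H ∈ F, IsHamPath H) ∧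
      (∀ H₁ ∈ F, ∀ H₂ ∈ F, H₁ ≠ H₂ → ¬ containsCopy G (H₁ ⊔ H₂)) ∧ #F = Hbarmax n G := by
  simp_rw [Hbarmax, ← and_assoc]
  exact exists_card_eq_sSup_card _ (by simp)

theorem stmt0 {β : Type*} (G : SimpleGraph β) (n : ℕ) (hn : 1 < n) :
    Hmax n G * Hbarmax n G ≤ n.factorial / 2 := by
  classical
  obtain ⟨F, hF, hFG, hcard⟩ := exists_card_eq_Hmax n G
  obtain ⟨F', hF', hF'G, hcard'⟩ := exists_card_eq_Hbarmax n G
  rw [← hcard, ← hcard', Nat.le_div_iff_mul_le two_pos]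
  calc #F * #F' * 2 ≤ Fintype.card (Equiv.Perm (Fin n)) :=
        card_mul_card_mul_le_card_of_le_card_transporter (fun σ H => H.map σ)
          (fun σ => SimpleGraph.map_injective σ.toEmbedding) (fun A B => containsCopy G (A ⊔ B))
          (fun σ A B h => SimpleGraph.map_sup σ A B ▸ h.map σ.toEmbedding) hFG hF'G
          fun H hH H' hH' => two_le_card_transporter_of_isHamPath hn (hF H hH) (hF' H' hH')
    _ = n.factorial := by rw [Fintype.card_perm, Fintype.card_fin]
end

section
/- In a vertex-transitive finite graph G', the product of the independence number and the clique number is at most the number of vertices: α(G')·ω(G') ≤ |V(G')|. -/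
/-!
Count pairs `(φ, v)` with `φ` an automorphism, `v ∈ t` and `φ v ∈ s`. Since the automorphism
group acts transitively, for fixed `v` and `w` exactly `|Aut G| / |V|` automorphisms send `v`
to `w`, so there are `|t| |s| |Aut G| / |V|` such pairs. On the other hand an automorphism maps
adjacent vertices to adjacent ones, so it sends at most one vertex of the clique `t` into the
independent set `s`, and there are at most `|Aut G|` pairs.
-/

open Finset MulAction

namespace MulAction

variable {Γ V : Type*} [Group Γ] [MulAction Γ V] [Fintype Γ] [DecidableEq V]

theorem card_filter_smul_eq_card_stabilizer (v : V) (g₀ : Γ) :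
    #{g : Γ | g • v = g₀ • v} = Nat.card (stabilizer Γ v) := by
  rw [Nat.card_eq_fintype_card, Fintype.card_subtype]
  refine card_bij' (fun g _ => g₀⁻¹ * g) (fun g _ => g₀ * g) ?_ ?_ ?_ ?_ <;>
    simp [mul_smul, inv_smul_eq_iff]

variable [IsPretransitive Γ V] [Fintype V]

theorem card_filter_smul_eq_mul_card (v w : V) :
    #{g : Γ | g • v = w} * Fintype.card V = Fintype.card Γ := by
  obtain ⟨g₀, rfl⟩ := exists_smul_eq Γ v w
  rw [card_filter_smul_eq_card_stabilizer, ← Nat.card_eq_fintype_card,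
    ← index_stabilizer_of_transitive Γ v, Subgroup.card_mul_index, Nat.card_eq_fintype_card]

theorem card_filter_smul_mem_mul_card (v : V) (s : Finset V) :
    #{g : Γ | g • v ∈ s} * Fintype.card V = #s * Fintype.card Γ := by
  rw [← sum_card_fiberwise_eq_card_filter, sum_mul,
    sum_congr rfl fun w _ => card_filter_smul_eq_mul_card v w, sum_const, smul_eq_mul]

theorem card_mul_card_le_of_forall_card_filter_smul_mem_le_one (s t : Finset V)
    (h : ∀ g : Γ, #{v ∈ t | g • v ∈ s} ≤ 1) : #s * #t ≤ Fintype.card V := by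
  refine le_of_mul_le_mul_right ?_ (Fintype.card_pos : 0 < Fintype.card Γ)
  calc #s * #t * Fintype.card Γ = (∑ v ∈ t, #{g : Γ | g • v ∈ s}) * Fintype.card V := by
        rw [sum_mul, sum_congr rfl fun v _ => card_filter_smul_mem_mul_card v s, sum_const,
          smul_eq_mul]
        ring
    _ = (∑ g : Γ, #{v ∈ t | g • v ∈ s}) * Fintype.card V := by
        congr 1
        exact sum_card_bipartiteAbove_eq_sum_card_bipartiteBelow (fun v (g : Γ) => g • v ∈ s)
    _ ≤ (∑ _g : Γ, 1) * Fintype.card V := by gcongr with g; exact h g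
    _ = Fintype.card V * Fintype.card Γ := by simp [mul_comm]

end MulAction

theorem SimpleGraph.IsClique.card_filter_map_mem_le_one {V W : Type*} {G : SimpleGraph V}
    {H : SimpleGraph W} [DecidableEq W] {t : Finset V} (ht : G.IsClique t) (f : G →g H)
    {s : Finset W} (hs : H.IsIndepSet s) : #{v ∈ t | f v ∈ s} ≤ 1 := by
  refine card_le_one.2 fun a ha b hb => by_contra fun hab => ?_
  rw [mem_filter] at ha hb
  have hfab : H.Adj (f a) (f b) := f.map_adj (ht ha.1 hb.1 hab)
  exact hs ha.2 hb.2 hfab.ne hfab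

theorem stmt1 {V : Type*} [Fintype V] (G : SimpleGraph V)
    (htrans : ∀ u v : V, ∃ φ : G ≃g G, φ u = v)
    (s t : Finset V)
    (hs : ∀ u ∈ s, ∀ v ∈ s, u ≠ v → ¬ G.Adj u v)
    (ht : G.IsClique ↑t) :
    s.card * t.card ≤ Fintype.card V := by
  classical
  have : Finite (G ≃g G) := Finite.of_injective _ RelIso.toEquiv_injective
  have : Fintype (G ≃g G) := Fintype.ofFinite _
  have : IsPretransitive (G ≃g G) V := ⟨htrans⟩
  exact card_mul_card_le_of_forall_card_filter_smul_mem_le_one s t fun (φ : G ≃g G) =>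
    ht.card_filter_map_mem_le_one φ.toHom hs
end

section
/- Let p be an odd prime. The graph G(p) on 𝔽_p², where (a,c) ~ (b,d) iff a ≠ b and ab = c + d, contains no cycle of length 4. -/
/-!
Adjacency `u ~ w` says `w.2 = u.1 * w.1 - u.2`, so a vertex is determined by its first coordinate
together with any one neighbour. If `u` and `v` are both adjacent to `w` and `w'`, subtracting the
four adjacency equations gives `(u.1 - v.1) * (w.1 - w'.1) = 0`; in the field `𝔽_p` one factor
vanishes, and either way two of the vertices coincide.
-/

/-- The graph `G(p)`: vertices `𝔽_p²`, with `(a,c) ~ (b,d)` iff `a ≠ b` and `ab = c + d`. -/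
def Gp (p : ℕ) : SimpleGraph (ZMod p × ZMod p) where
  Adj u v := u.1 ≠ v.1 ∧ u.1 * v.1 = u.2 + v.2
  symm := by
    constructor
    rintro u v ⟨h1, h2⟩
    refine ⟨h1.symm, ?_⟩
    rw [mul_comm, h2, add_comm]
  loopless := by constructor; rintro u ⟨h1, _⟩; exact h1 rfl

namespace Gp

variable {p : ℕ}

theorem eq_of_adj_of_fst_eq {u v w : ZMod p × ZMod p} (hu : (Gp p).Adj u w) (hv : (Gp p).Adj v w)
    (h : u.1 = v.1) : u = v := by
  refine Prod.ext h (add_right_cancel (b := w.2) ?_)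
  rw [← hu.2, ← hv.2, h]

theorem fst_sub_mul_fst_sub_eq_zero {u v w w' : ZMod p × ZMod p} (huw : (Gp p).Adj u w)
    (huw' : (Gp p).Adj u w') (hvw : (Gp p).Adj v w) (hvw' : (Gp p).Adj v w') :
    (u.1 - v.1) * (w.1 - w'.1) = 0 := by
  linear_combination huw.2 - huw'.2 - hvw.2 + hvw'.2

theorem eq_of_adj_of_adj [Fact p.Prime] {u v w w' : ZMod p × ZMod p} (hw : w ≠ w')
    (huw : (Gp p).Adj u w) (huw' : (Gp p).Adj u w') (hvw : (Gp p).Adj v w)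
    (hvw' : (Gp p).Adj v w') : u = v := by
  rcases mul_eq_zero.1 (fst_sub_mul_fst_sub_eq_zero huw huw' hvw hvw') with h | h
  · exact eq_of_adj_of_fst_eq huw hvw (sub_eq_zero.1 h)
  · exact absurd (eq_of_adj_of_fst_eq huw.symm huw'.symm (sub_eq_zero.1 h)) hw

end Gp

theorem stmt9_general (p : ℕ) [Fact p.Prime]
    (a b c d : ZMod p × ZMod p)
    (hac : a ≠ c) (hbd : b ≠ d) :
    ¬ ((Gp p).Adj a b ∧ (Gp p).Adj b c ∧ (Gp p).Adj c d ∧ (Gp p).Adj d a) := by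
  rintro ⟨hab, hbc, hcd, hda⟩
  exact hac (Gp.eq_of_adj_of_adj hbd hab hda.symm hbc.symm hcd)

/-- `G(p)` contains no cycle of length 4. -/
theorem stmt9 (p : ℕ) [Fact p.Prime] (hodd : Odd p)
    (a b c d : ZMod p × ZMod p)
    (hab : a ≠ b) (hac : a ≠ c) (had : a ≠ d) (hbc : b ≠ c) (hbd : b ≠ d) (hcd : c ≠ d) :
    ¬ ((Gp p).Adj a b ∧ (Gp p).Adj b c ∧ (Gp p).Adj c d ∧ (Gp p).Adj d a) :=
  stmt9_general p a b c d hac hbd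
end

section
/- Let p be an odd prime and G(p) the graph on 𝔽_p² where (a,c) ~ (b,d) iff a ≠ b and ab = c + d. Every eigenvalue λ of the adjacency matrix of G(p) other than the degree eigenvalue p − 1 satisfies λ² ≤ 4p − 5. -/
instance (p : ℕ) : DecidableRel (Gp p).Adj :=
  fun u v => inferInstanceAs (Decidable (u.1 ≠ v.1 ∧ u.1 * v.1 = u.2 + v.2))

/-!
Two distinct vertices of `G(p)` have at most one common neighbour: `(b, d)` is adjacent to both
`(a, c)` and `(a', c')` only if `(a - a') b = c - c'`. Since `G(p)` is `(p - 1)`-regular, an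
eigenvector for `μ ≠ p - 1` is orthogonal to the constants, hence an eigenvector of `A² - J` for
`μ²`. That matrix has `p - 2` on the diagonal and `0` or `-1` off it, so by Gershgorin `μ²` is at
most an absolute row sum `(p - 2) + (p² - 1) - (p - 1)(p - 2) = 4p - 5`.
-/

open Finset Matrix

namespace SimpleGraph

variable {V : Type*} [Fintype V] {G : SimpleGraph V} [DecidableRel G.Adj]

theorem adjMatrix_mul_self_apply_le_one {α : Type*} [Semiring α] [PartialOrder α]
    [IsOrderedRing α] (hcommon : ∀ u w, u ≠ w → (G.commonNeighbors u w).Subsingleton)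
    {u w : V} (huw : u ≠ w) : (G.adjMatrix α * G.adjMatrix α) u w ≤ 1 := by
  have hsub : ∀ x ∈ (G.neighborFinset u).filter (G.Adj · w), x ∈ G.commonNeighbors u w := by
    intro x hx
    rw [mem_filter, mem_neighborFinset] at hx
    exact G.mem_commonNeighbors.mpr ⟨hx.1, hx.2.symm⟩
  have hcard := card_le_one.mpr fun x hx y hy => hcommon u w huw (hsub x hx) (hsub y hy)
  simp only [adjMatrix_mul_apply, adjMatrix_apply, sum_boole]
  exact Nat.cast_one (R := α) ▸ Nat.mono_cast hcard

namespace IsRegularOfDegree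

variable {d : ℕ} (hreg : G.IsRegularOfDegree d)
include hreg

theorem sum_adjMatrix_mul_self_apply {α : Type*} [Semiring α] (u : V) :
    ∑ w, (G.adjMatrix α * G.adjMatrix α) u w = (d : α) ^ 2 := by
  have hconst : G.adjMatrix α *ᵥ Function.const V 1 = Function.const V (d : α) := by
    ext w; simp [hreg w]
  have := congrFun (mulVec_mulVec (Function.const V (1 : α)) (G.adjMatrix α) (G.adjMatrix α)) u
  rw [hconst, adjMatrix_mulVec_const_apply_of_regular hreg] at this
  simpa [mulVec, dotProduct, sq] using this.symm

theorem sum_eq_zero_of_adjMatrix_mulVec_eq_smul {K : Type*} [Field K] {μ : K} {v : V → K}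
    (heig : G.adjMatrix K *ᵥ v = μ • v) (hμ : μ ≠ d) : ∑ u, v u = 0 := by
  have hdeg : Function.const V 1 ᵥ* G.adjMatrix K = Function.const V (d : K) := by
    ext u; simp [hreg u]
  have h := dotProduct_mulVec (Function.const V 1) (G.adjMatrix K) v
  rw [heig, hdeg] at h
  simp only [dotProduct, Function.const_apply, one_mul, Pi.smul_apply, smul_eq_mul,
    ← mul_sum] at h
  by_contra hsum
  exact hμ (mul_right_cancel₀ hsum h)

theorem sq_le_of_adjMatrix_mulVec_eq_smul [DecidableEq V]
    (hcommon : ∀ u w, u ≠ w → (G.commonNeighbors u w).Subsingleton)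
    {μ : ℝ} {v : V → ℝ} (hv : v ≠ 0) (heig : G.adjMatrix ℝ *ᵥ v = μ • v) (hμ : μ ≠ d) :
    μ ^ 2 ≤ (d - 1) + (Fintype.card V - 1) - (d ^ 2 - d) := by
  set A := G.adjMatrix ℝ
  set M : Matrix V V ℝ := A * A - of fun _ _ => 1
  have hM : M *ᵥ v = μ ^ 2 • v := by
    have hJ : (of fun _ _ => 1 : Matrix V V ℝ) *ᵥ v = 0 := by
      ext u; simp [mulVec, dotProduct, hreg.sum_eq_zero_of_adjMatrix_mulVec_eq_smul heig hμ]
    rw [sub_mulVec, hJ, sub_zero, ← mulVec_mulVec, heig, mulVec_smul, heig, smul_smul, sq]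
  have heigval : Module.End.HasEigenvalue (toLin' M) (μ ^ 2) :=
    Module.End.hasEigenvalue_of_hasEigenvector ⟨Module.End.mem_eigenspace_iff.mpr hM, hv⟩
  obtain ⟨k, hk⟩ := eigenvalue_mem_ball heigval
  have hdiag : M k k = d - 1 := by
    simp only [M, Matrix.sub_apply, of_apply]
    rw [adjMatrix_mul_self_apply_self, hreg k]
  have hoff : ∀ j ∈ univ.erase k, ‖M k j‖ = 1 - (A * A) k j := by
    intro j hj
    have h1 := adjMatrix_mul_self_apply_le_one (α := ℝ) hcommon (ne_of_mem_erase hj).symm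
    simp only [M, Matrix.sub_apply, of_apply]
    rw [Real.norm_eq_abs, abs_of_nonpos (by linarith)]
    ring
  have hrow : ∑ j ∈ univ.erase k, ‖M k j‖ = (Fintype.card V - 1) - (d ^ 2 - d) := by
    rw [sum_congr rfl hoff, sum_erase_eq_sub (mem_univ k), sum_sub_distrib,
      hreg.sum_adjMatrix_mul_self_apply, adjMatrix_mul_self_apply_self, hreg k]
    simp only [sum_const, card_univ, nsmul_eq_mul, mul_one]
    ring
  rw [Metric.mem_closedBall, Real.dist_eq, hdiag, hrow] at hk
  linarith [le_abs_self (μ ^ 2 - (d - 1))]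

end IsRegularOfDegree
end SimpleGraph

namespace Gp

theorem isRegularOfDegree (p : ℕ) [NeZero p] : (Gp p).IsRegularOfDegree (p - 1) := by
  intro u
  have hnbr : (Gp p).neighborFinset u = (univ.erase u.1).image fun b => (b, u.1 * b - u.2) := by
    ext ⟨b, d⟩
    simp only [SimpleGraph.mem_neighborFinset, mem_image, mem_erase, mem_univ, and_true,
      Prod.mk.injEq]
    constructor
    · rintro ⟨hne, hadj⟩
      exact ⟨b, Ne.symm hne, rfl, by linear_combination hadj⟩
    · rintro ⟨b, hne, rfl, rfl⟩
      exact ⟨Ne.symm hne, by ring⟩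
  rw [← SimpleGraph.card_neighborFinset_eq_degree, hnbr,
    card_image_of_injective _ fun _ _ h => congrArg Prod.fst h,
    card_erase_of_mem (mem_univ _), card_univ, ZMod.card]

theorem commonNeighbors_subsingleton (p : ℕ) [Fact p.Prime] {u w : ZMod p × ZMod p}
    (huw : u ≠ w) : ((Gp p).commonNeighbors u w).Subsingleton := by
  rintro x ⟨⟨-, hux⟩, ⟨-, hwx⟩⟩ y ⟨⟨-, huy⟩, ⟨-, hwy⟩⟩
  have hkey : (u.1 - w.1) * (x.1 - y.1) = 0 := by linear_combination hux - hwx - huy + hwy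
  rcases mul_eq_zero.mp hkey with h | h
  · exact absurd (Prod.ext (sub_eq_zero.mp h) (by linear_combination x.1 * h - hux + hwx)) huw
  · exact Prod.ext (sub_eq_zero.mp h) (by linear_combination u.1 * h - hux + huy)

end Gp

theorem stmt11_general (p : ℕ) [Fact p.Prime] (μ : ℝ)
    (v : ZMod p × ZMod p → ℝ) (hv : v ≠ 0)
    (heig : ((Gp p).adjMatrix ℝ).mulVec v = μ • v) (hμ : μ ≠ (p : ℝ) - 1) :
    μ ^ 2 ≤ 4 * (p : ℝ) - 5 := by
  have hp : 1 ≤ p := (Fact.out : p.Prime).one_lt.le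
  have hbound := (Gp.isRegularOfDegree p).sq_le_of_adjMatrix_mulVec_eq_smul
    (fun _ _ => Gp.commonNeighbors_subsingleton p) hv heig (by rwa [Nat.cast_sub hp, Nat.cast_one])
  rw [Fintype.card_prod, ZMod.card, Nat.cast_sub hp] at hbound
  push_cast at hbound
  linarith

/-- Every eigenvalue `μ ≠ p - 1` of the adjacency matrix of `G(p)` satisfies
`μ² ≤ 4p - 5`. -/
theorem stmt11 (p : ℕ) [Fact p.Prime] (hodd : Odd p) (μ : ℝ)
    (v : ZMod p × ZMod p → ℝ) (hv : v ≠ 0)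
    (heig : ((Gp p).adjMatrix ℝ).mulVec v = μ • v) (hμ : μ ≠ (p : ℝ) - 1) :
    μ ^ 2 ≤ 4 * (p : ℝ) - 5 :=
  stmt11_general p μ v hv heig hμ
end

section
/- For every n there is a set J of directed Hamiltonian paths of K_n with |J| ≥ n!/3ⁿ such that in every path of J, any two vertices at distance exactly 3 along the path receive the same color under a fixed 3-coloring with cyclic coloring pattern 1,2,3,1,2,3,...; consequently no two paths of J are C_4-creating in the way where one path contributes 3 consecutive edges of the C_4. -/
/-- `{u,v}` is an edge of the (directed) Hamiltonian path given by the ordering `f`. -/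
def pathEdge {n : ℕ} (f : Fin n → Fin n) (u v : Fin n) : Prop :=
  ∃ i j : Fin n, (j : ℕ) = (i : ℕ) + 1 ∧ ((u = f i ∧ v = f j) ∨ (u = f j ∧ v = f i))

/-- Two Hamiltonian paths (given by orderings `f`, `g`) are `C₄`-creating in the `H³` way:
one of them contributes three consecutive edges of the `C₄` (between vertices at distance
three along it), and the other contributes the closing edge. -/
def H3way {n : ℕ} (f g : Fin n → Fin n) : Prop :=
  (∃ i k : Fin n, (k : ℕ) = (i : ℕ) + 3 ∧ pathEdge g (f i) (f k)) ∨
  (∃ i k : Fin n, (k : ℕ) = (i : ℕ) + 3 ∧ pathEdge f (g i) (g k))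

/-- If `h` is compatible with `c` then any edge of the path `h` joins vertices of
different colors. -/
lemma pathEdge_colors_ne {n : ℕ} (c : Fin n → ZMod 3) (h : Fin n → Fin n)
    (hc : ∀ i : Fin n, c (h i) = ((i : ℕ) : ZMod 3)) {u v : Fin n}
    (he : pathEdge h u v) : c u ≠ c v := by
  obtain ⟨a, b, hb, hcase⟩ := he
  have hone : ((b : ℕ) : ZMod 3) = ((a : ℕ) : ZMod 3) + 1 := by
    rw [hb]; push_cast; ring
  rcases hcase with ⟨hu, hv⟩ | ⟨hu, hv⟩ <;> subst hu <;> subst hv <;>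
    rw [hc, hc, hone] <;> intro H <;> simp at H

theorem stmt12 (n : ℕ) :
    ∃ (c : Fin n → ZMod 3) (J : Finset (Equiv.Perm (Fin n))),
      (n.factorial : ℝ) / 3 ^ n ≤ J.card ∧
      (∀ f ∈ J, ∀ i : Fin n, c (f i) = ((i : ℕ) : ZMod 3)) ∧
      (∀ f ∈ J, ∀ g ∈ J, f ≠ g → ¬ H3way (f : Fin n → Fin n) (g : Fin n → Fin n)) := by
  classical
  set φ : Equiv.Perm (Fin n) → (Fin n → ZMod 3) :=
    fun f v => ((f.symm v : ℕ) : ZMod 3) with hφ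
  -- pigeonhole: some coloring has a big fiber
  have hsum : ∑ c : Fin n → ZMod 3,
      (Finset.univ.filter fun f : Equiv.Perm (Fin n) => φ f = c).card = n.factorial := by
    rw [← Finset.card_eq_sum_card_fiberwise (fun f _ => Finset.mem_univ (φ f))]
    simp [Finset.card_univ, Fintype.card_perm]
  have hkey : ∃ c : Fin n → ZMod 3,
      n.factorial ≤ 3 ^ n * (Finset.univ.filter fun f : Equiv.Perm (Fin n) => φ f = c).card := by
    by_contra hcon
    push_neg at hcon
    have hlt : ∑ c : Fin n → ZMod 3,
        (3 ^ n * (Finset.univ.filter fun f : Equiv.Perm (Fin n) => φ f = c).card) <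
        ∑ _c : Fin n → ZMod 3, n.factorial := by
      apply Finset.sum_lt_sum_of_nonempty Finset.univ_nonempty
      intro c _; exact hcon c
    rw [← Finset.mul_sum, hsum, Finset.sum_const, Finset.card_univ] at hlt
    have hcard : Fintype.card (Fin n → ZMod 3) = 3 ^ n := by
      simp
    rw [hcard, smul_eq_mul] at hlt
    exact lt_irrefl _ hlt
  obtain ⟨c, hc⟩ := hkey
  refine ⟨c, Finset.univ.filter fun f => φ f = c, ?_, ?_, ?_⟩
  · rw [div_le_iff₀ (by positivity)]
    have : (n.factorial : ℝ) ≤ 3 ^ n *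
        ((Finset.univ.filter fun f : Equiv.Perm (Fin n) => φ f = c).card : ℝ) := by
      exact_mod_cast hc
    linarith
  · intro f hf i
    rw [Finset.mem_filter] at hf
    have := congrFun hf.2 (f i)
    simpa [hφ] using this.symm
  · intro f hf g hg _ H
    rw [Finset.mem_filter] at hf hg
    have hcf : ∀ i : Fin n, c (f i) = ((i : ℕ) : ZMod 3) := fun i => by
      have := congrFun hf.2 (f i); simpa [hφ] using this.symm
    have hcg : ∀ i : Fin n, c (g i) = ((i : ℕ) : ZMod 3) := fun i => by
      have := congrFun hg.2 (g i); simpa [hφ] using this.symm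
    rcases H with ⟨i, k, hk, he⟩ | ⟨i, k, hk, he⟩
    · have h1 := pathEdge_colors_ne c g hcg he
      apply h1
      rw [hcf, hcf, hk]; push_cast; ring_nf
      rw [show ((3:ZMod 3)) = 0 by decide]; ring
    · have h1 := pathEdge_colors_ne c f hcf he
      apply h1
      rw [hcg, hcg, hk]; push_cast; ring_nf
      rw [show ((3:ZMod 3)) = 0 by decide]; ring
end

section
/- For every S ⊆ {H¹, H², H³}: H_n(C_4, S \ {H³}) ≤ H_n(C_4, S) ≤ 3ⁿ · H_n(C_4, S \ {H³}). -/
/-- `a, b, c, d` span a 4-cycle (in this cyclic order) in the graph `U`. -/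
def isC4in {V : Type*} (U : SimpleGraph V) (a b c d : V) : Prop :=
  (a ≠ b ∧ a ≠ c ∧ a ≠ d ∧ b ≠ c ∧ b ≠ d ∧ c ≠ d) ∧
  U.Adj a b ∧ U.Adj b c ∧ U.Adj c d ∧ U.Adj d a

/-- `P` contains two (cyclically) consecutive edges of the 4-cycle `a b c d`. -/
def run2 {V : Type*} (P : SimpleGraph V) (a b c d : V) : Prop :=
  (P.Adj a b ∧ P.Adj b c) ∨ (P.Adj b c ∧ P.Adj c d) ∨
  (P.Adj c d ∧ P.Adj d a) ∨ (P.Adj d a ∧ P.Adj a b)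

/-- `P` contains three (cyclically) consecutive edges of the 4-cycle `a b c d`. -/
def run3 {V : Type*} (P : SimpleGraph V) (a b c d : V) : Prop :=
  (P.Adj a b ∧ P.Adj b c ∧ P.Adj c d) ∨ (P.Adj b c ∧ P.Adj c d ∧ P.Adj d a) ∨
  (P.Adj c d ∧ P.Adj d a ∧ P.Adj a b) ∨ (P.Adj d a ∧ P.Adj a b ∧ P.Adj b c)

/-- The 4-cycle `a b c d` is created by the paths `P` and `Q` in the way `H^r`
(`r ∈ {1,2,3}`): the longest run of consecutive `C₄`-edges contained in one of the two
paths has length exactly `r`. -/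
def hasWay {V : Type*} (P Q : SimpleGraph V) (r : ℕ) (a b c d : V) : Prop :=
  isC4in (P ⊔ Q) a b c d ∧
  ((r = 3 ∧ (run3 P a b c d ∨ run3 Q a b c d)) ∨
   (r = 2 ∧ (run2 P a b c d ∨ run2 Q a b c d) ∧ ¬ (run3 P a b c d ∨ run3 Q a b c d)) ∨
   (r = 1 ∧ ¬ (run2 P a b c d ∨ run2 Q a b c d)))

/-- `P` and `Q` create some `C₄` in one of the ways belonging to `S ⊆ {1,2,3}`. -/
def createsIn {n : ℕ} (S : Finset ℕ) (P Q : SimpleGraph (Fin n)) : Prop :=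
  ∃ a b c d : Fin n, ∃ r ∈ S, hasWay P Q r a b c d

/-- `H_n(C₄, S)`: the maximum number of Hamiltonian paths of `K_n` such that every pair
creates a `C₄` in one of the ways in `S`. -/
noncomputable def HC4 (n : ℕ) (S : Finset ℕ) : ℕ :=
  sSup {k | ∃ F : Finset (SimpleGraph (Fin n)), (∀ H ∈ F, IsHamPath H) ∧
    (∀ H₁ ∈ F, ∀ H₂ ∈ F, H₁ ≠ H₂ → createsIn S H₁ H₂) ∧ F.card = k}

/-!
Colour each vertex of a Hamiltonian path by its position along the path modulo 3. Every path
edge changes the colour by `±1`, while three consecutive path edges that do not turn back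
return to the starting colour. Hence if two paths induce the same colouring, the fourth edge of
a `C₄` containing three consecutive edges of one of them would join two vertices of equal
colour: such paths never create a `C₄` in the `H³` way. Splitting an extremal family for `S`
by the `3 ^ n` colourings gives classes that are families for `S \ {H³}`, whence the upper
bound; the lower bound is monotonicity in `S`.
-/

open Finset SimpleGraph

lemma IsHamPath.exists_eq_comap_pathGraph {n : ℕ} {H : SimpleGraph (Fin n)} (hH : IsHamPath H) :
    ∃ p : Equiv.Perm (Fin n), H = (pathGraph n).comap p := by
  obtain ⟨f, hf⟩ := hH
  refine ⟨f.symm, SimpleGraph.ext <| funext₂ fun u v => propext ?_⟩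
  rw [hf, comap_adj, pathGraph_adj]
  constructor
  · rintro ⟨i, j, hij, ⟨rfl, rfl⟩ | ⟨rfl, rfl⟩⟩ <;> simp [hij]
  · rintro (h | h)
    · exact ⟨f.symm u, f.symm v, h.symm, Or.inl (by simp)⟩
    · exact ⟨f.symm v, f.symm u, h.symm, Or.inr (by simp)⟩

section PathColouring

variable {V : Type*} {m : ℕ} {p : V → Fin m}

def posColour (p : V → Fin m) (v : V) : ZMod 3 := ((p v : ℕ) : ZMod 3)

lemma posColour_adj_comap_pathGraph {u v : V} (h : ((pathGraph m).comap p).Adj u v) :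
    posColour p v = posColour p u + 1 ∨ posColour p u = posColour p v + 1 := by
  rw [comap_adj, pathGraph_adj] at h
  rcases h with h | h
  · exact Or.inl (by simp [posColour, ← h])
  · exact Or.inr (by simp [posColour, ← h])

lemma posColour_eq_of_run_comap_pathGraph (hp : Function.Injective p) {w x y z : V}
    (h₁ : ((pathGraph m).comap p).Adj w x) (h₂ : ((pathGraph m).comap p).Adj x y)
    (h₃ : ((pathGraph m).comap p).Adj y z) (hwy : w ≠ y) (hxz : x ≠ z) :
    posColour p z = posColour p w := by
  simp only [comap_adj, pathGraph_adj] at h₁ h₂ h₃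
  have hwy' := Fin.val_ne_of_ne (hp.ne hwy)
  have hxz' := Fin.val_ne_of_ne (hp.ne hxz)
  have : (p z : ℕ) = p w + 3 ∨ (p w : ℕ) = p z + 3 := by omega
  rcases this with h | h <;> simp [posColour, h] <;> decide

lemma not_run3_comap_pathGraph (hp : Function.Injective p) {G : SimpleGraph V}
    (hG : ∀ u v, G.Adj u v → posColour p v = posColour p u + 1 ∨ posColour p u = posColour p v + 1)
    {a b c d : V} (hC : isC4in G a b c d) : ¬ run3 ((pathGraph m).comap p) a b c d := by
  obtain ⟨⟨hab, hac, had, hbc, hbd, hcd⟩, hGab, hGbc, hGcd, hGda⟩ := hC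
  have closing : ∀ {w x y z}, ((pathGraph m).comap p).Adj w x →
      ((pathGraph m).comap p).Adj x y → ((pathGraph m).comap p).Adj y z → w ≠ y → x ≠ z →
      G.Adj z w → False := by
    intro w x y z h₁ h₂ h₃ hwy hxz hzw
    have hc := posColour_eq_of_run_comap_pathGraph hp h₁ h₂ h₃ hwy hxz
    have hne : ∀ t : ZMod 3, t ≠ t + 1 := by decide
    rcases hG z w hzw with h | h <;> rw [hc] at h <;> exact hne _ h
  rintro (⟨h₁, h₂, h₃⟩ | ⟨h₁, h₂, h₃⟩ | ⟨h₁, h₂, h₃⟩ | ⟨h₁, h₂, h₃⟩)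
  · exact closing h₁ h₂ h₃ hac hbd hGda
  · exact closing h₁ h₂ h₃ hbd hac.symm hGab
  · exact closing h₁ h₂ h₃ hac.symm hbd.symm hGbc
  · exact closing h₁ h₂ h₃ hbd.symm hac hGcd

lemma not_hasWay_three_of_posColour_eq {q : V → Fin m} (hp : Function.Injective p)
    (hq : Function.Injective q) (hpq : posColour p = posColour q) {a b c d : V} :
    ¬ hasWay ((pathGraph m).comap p) ((pathGraph m).comap q) 3 a b c d := by
  rintro ⟨hC, ⟨-, hrun⟩ | ⟨h, -⟩ | ⟨h, -⟩⟩
  · have hG : ∀ u v, ((pathGraph m).comap p ⊔ (pathGraph m).comap q).Adj u v →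
        posColour p v = posColour p u + 1 ∨ posColour p u = posColour p v + 1 := by
      rintro u v (h | h)
      · exact posColour_adj_comap_pathGraph h
      · rw [hpq]; exact posColour_adj_comap_pathGraph h
    rcases hrun with hrun | hrun
    · exact not_run3_comap_pathGraph hp hG hC hrun
    · exact not_run3_comap_pathGraph hq (hpq ▸ hG) hC hrun
  all_goals omega

end PathColouring

section Families

variable {n : ℕ}

def IsC4Family (S : Finset ℕ) (F : Finset (SimpleGraph (Fin n))) : Prop :=
  (∀ H ∈ F, IsHamPath H) ∧ ∀ H₁ ∈ F, ∀ H₂ ∈ F, H₁ ≠ H₂ → createsIn S H₁ H₂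

lemma HC4_eq_sSup (S : Finset ℕ) :
    HC4 n S = sSup {k | ∃ F : Finset (SimpleGraph (Fin n)), IsC4Family S F ∧ #F = k} := by
  simp only [HC4, IsC4Family, and_assoc]

lemma bddAbove_card_isC4Family (S : Finset ℕ) :
    BddAbove {k | ∃ F : Finset (SimpleGraph (Fin n)), IsC4Family S F ∧ #F = k} := by
  classical
  refine ⟨Fintype.card (SimpleGraph (Fin n)), ?_⟩
  rintro k ⟨F, -, rfl⟩
  exact card_le_univ F

lemma IsC4Family.card_le_HC4 {S : Finset ℕ} {F : Finset (SimpleGraph (Fin n))}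
    (hF : IsC4Family S F) : #F ≤ HC4 n S := by
  rw [HC4_eq_sSup]
  exact le_csSup (bddAbove_card_isC4Family S) ⟨F, hF, rfl⟩

lemma exists_isC4Family_card_eq_HC4 (S : Finset ℕ) :
    ∃ F : Finset (SimpleGraph (Fin n)), IsC4Family S F ∧ #F = HC4 n S := by
  rw [HC4_eq_sSup]
  refine Nat.sSup_mem ⟨0, ?_⟩ (bddAbove_card_isC4Family S)
  exact ⟨∅, ⟨by simp, by simp⟩, rfl⟩

lemma IsC4Family.mono {S T : Finset ℕ} (hST : S ⊆ T) {F : Finset (SimpleGraph (Fin n))}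
    (hF : IsC4Family S F) : IsC4Family T F := by
  refine ⟨hF.1, fun H₁ h₁ H₂ h₂ hne => ?_⟩
  obtain ⟨a, b, c, d, r, hr, hw⟩ := hF.2 H₁ h₁ H₂ h₂ hne
  exact ⟨a, b, c, d, r, hST hr, hw⟩

lemma IsC4Family.subset {S : Finset ℕ} {F G : Finset (SimpleGraph (Fin n))} (hGF : G ⊆ F)
    (hF : IsC4Family S F) : IsC4Family S G :=
  ⟨fun H hH => hF.1 H (hGF hH), fun H₁ h₁ H₂ h₂ => hF.2 H₁ (hGF h₁) H₂ (hGF h₂)⟩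

lemma HC4_mono {S T : Finset ℕ} (hST : S ⊆ T) : HC4 n S ≤ HC4 n T := by
  obtain ⟨F, hF, hcard⟩ := exists_isC4Family_card_eq_HC4 (n := n) S
  exact hcard ▸ (hF.mono hST).card_le_HC4

lemma IsC4Family.erase_three {S : Finset ℕ} {F : Finset (SimpleGraph (Fin n))}
    (hF : IsC4Family S F) {c : Fin n → ZMod 3}
    (hc : ∀ H ∈ F, ∃ p : Equiv.Perm (Fin n), H = (pathGraph n).comap p ∧ posColour p = c) :
    IsC4Family (S.erase 3) F := by
  refine ⟨hF.1, fun H₁ h₁ H₂ h₂ hne => ?_⟩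
  obtain ⟨a, b, u, d, r, hr, hw⟩ := hF.2 H₁ h₁ H₂ h₂ hne
  refine ⟨a, b, u, d, r, mem_erase.2 ⟨?_, hr⟩, hw⟩
  rintro rfl
  obtain ⟨p, rfl, hp⟩ := hc H₁ h₁
  obtain ⟨q, rfl, hq⟩ := hc H₂ h₂
  exact not_hasWay_three_of_posColour_eq p.injective q.injective (hp.trans hq.symm) hw

lemma HC4_le_three_pow_mul_HC4_erase_three (S : Finset ℕ) :
    HC4 n S ≤ 3 ^ n * HC4 n (S.erase 3) := by
  classical
  obtain ⟨F, hF, hcard⟩ := exists_isC4Family_card_eq_HC4 (n := n) S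
  let colourClass (c : Fin n → ZMod 3) : Finset (SimpleGraph (Fin n)) :=
    {H ∈ F | ∃ p : Equiv.Perm (Fin n), H = (pathGraph n).comap p ∧ posColour p = c}
  have hcover : F ⊆ univ.biUnion colourClass := fun H hH => by
    obtain ⟨p, hp⟩ := (hF.1 H hH).exists_eq_comap_pathGraph
    exact mem_biUnion.2 ⟨posColour p, mem_univ _, mem_filter.2 ⟨hH, p, hp, rfl⟩⟩
  have hclass (c : Fin n → ZMod 3) : #(colourClass c) ≤ HC4 n (S.erase 3) :=
    ((hF.subset (filter_subset _ F)).erase_three fun _ hH => (mem_filter.1 hH).2).card_le_HC4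
  calc HC4 n S = #F := hcard.symm
    _ ≤ #(univ.biUnion colourClass) := card_le_card hcover
    _ ≤ ∑ c, #(colourClass c) := card_biUnion_le
    _ ≤ ∑ _c : Fin n → ZMod 3, HC4 n (S.erase 3) := sum_le_sum fun c _ => hclass c
    _ = 3 ^ n * HC4 n (S.erase 3) := by simp

end Families

theorem stmt13_general (n : ℕ) (S : Finset ℕ) :
    HC4 n (S.erase 3) ≤ HC4 n S ∧ HC4 n S ≤ 3 ^ n * HC4 n (S.erase 3) :=
  ⟨HC4_mono (erase_subset 3 S), HC4_le_three_pow_mul_HC4_erase_three S⟩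

theorem stmt13 (n : ℕ) (S : Finset ℕ) (hS : S ⊆ {1, 2, 3}) :
    HC4 n (S.erase 3) ≤ HC4 n S ∧ HC4 n S ≤ 3 ^ n * HC4 n (S.erase 3) :=
  stmt13_general n S
end

section
/- The sequence RP(n) of maximum sizes of pairwise reversing sets of permutations is supermultiplicative: RP(m)·RP(n) ≤ RP(m+n) for all m, n ≥ 1. Consequently, if RP(n)^{1/n} is unbounded then it tends to infinity. -/
/-- Two permutations of `[n]` are reversing if some two coordinates contain the same two
elements in reversed order. -/
def Reversing {n : ℕ} (π₁ π₂ : Equiv.Perm (Fin n)) : Prop :=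
  ∃ i j : Fin n, i ≠ j ∧ π₁ i = π₂ j ∧ π₁ j = π₂ i

/-- `RP n`: the maximum number of pairwise reversing permutations of `[n]`. -/
noncomputable def RP (n : ℕ) : ℕ :=
  sSup {k | ∃ F : Finset (Equiv.Perm (Fin n)),
    (∀ π₁ ∈ F, ∀ π₂ ∈ F, π₁ ≠ π₂ → Reversing π₁ π₂) ∧ F.card = k}

namespace RPaux

def RPset (n : ℕ) : Set ℕ := {k | ∃ F : Finset (Equiv.Perm (Fin n)),
    (∀ π₁ ∈ F, ∀ π₂ ∈ F, π₁ ≠ π₂ → Reversing π₁ π₂) ∧ F.card = k}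

lemma RP_eq (n : ℕ) : RP n = sSup (RPset n) := rfl

lemma bdd (n : ℕ) : BddAbove (RPset n) := by
  refine ⟨Fintype.card (Equiv.Perm (Fin n)), ?_⟩
  rintro k ⟨F, -, rfl⟩
  exact F.card_le_univ

lemma mem_one (n : ℕ) : 1 ∈ RPset n :=
  ⟨{1}, by simp, by simp⟩

lemma one_le_RP (n : ℕ) : 1 ≤ RP n := le_csSup (bdd n) (mem_one n)

lemma exists_F (n : ℕ) : ∃ F : Finset (Equiv.Perm (Fin n)),
    (∀ π₁ ∈ F, ∀ π₂ ∈ F, π₁ ≠ π₂ → Reversing π₁ π₂) ∧ F.card = RP n :=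
  Nat.sSup_mem ⟨1, mem_one n⟩ (bdd n)

lemma supermult (m n : ℕ) : RP m * RP n ≤ RP (m + n) := by
  obtain ⟨F, hF, hFc⟩ := exists_F m
  obtain ⟨G, hG, hGc⟩ := exists_F n
  set e := finSumFinEquiv (m := m) (n := n) with he
  set Φ : Equiv.Perm (Fin m) × Equiv.Perm (Fin n) → Equiv.Perm (Fin (m + n)) :=
    fun p => e.permCongr (p.1.sumCongr p.2) with hΦ
  have hΦinj : Function.Injective Φ := by
    intro p q h
    have h' : p.1.sumCongr p.2 = q.1.sumCongr q.2 := e.permCongr.injective h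
    have h1 : ∀ x, (p.1.sumCongr p.2) x = (q.1.sumCongr q.2) x := fun x => by rw [h']
    refine Prod.ext (Equiv.ext fun i => ?_) (Equiv.ext fun i => ?_)
    · have := h1 (Sum.inl i); simpa using this
    · have := h1 (Sum.inr i); simpa using this
  have hΦapp_l : ∀ p i, Φ p (e (Sum.inl i)) = e (Sum.inl (p.1 i)) := by
    intro p i; simp [hΦ]
  have hΦapp_r : ∀ p i, Φ p (e (Sum.inr i)) = e (Sum.inr (p.2 i)) := by
    intro p i; simp [hΦ]
  have hmem : RP m * RP n ∈ RPset (m + n) := by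
    refine ⟨(F ×ˢ G).image Φ, ?_, ?_⟩
    · intro π₁ hπ₁ π₂ hπ₂ hne
      simp only [Finset.mem_image, Finset.mem_product] at hπ₁ hπ₂
      obtain ⟨p, ⟨hp1, hp2⟩, rfl⟩ := hπ₁
      obtain ⟨r, ⟨hr1, hr2⟩, rfl⟩ := hπ₂
      by_cases hpr : p.1 = r.1
      · have hne2 : p.2 ≠ r.2 := by
          intro h2; exact hne (congrArg Φ (Prod.ext hpr h2))
        obtain ⟨i, j, hij, hA, hB⟩ := hG p.2 hp2 r.2 hr2 hne2
        refine ⟨e (Sum.inr i), e (Sum.inr j), ?_, ?_, ?_⟩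
        · simp [hij]
        · rw [hΦapp_r, hΦapp_r, hA]
        · rw [hΦapp_r, hΦapp_r, hB]
      · obtain ⟨i, j, hij, hA, hB⟩ := hF p.1 hp1 r.1 hr1 hpr
        refine ⟨e (Sum.inl i), e (Sum.inl j), ?_, ?_, ?_⟩
        · simp [hij]
        · rw [hΦapp_l, hΦapp_l, hA]
        · rw [hΦapp_l, hΦapp_l, hB]
    · rw [Finset.card_image_of_injective _ hΦinj, Finset.card_product, hFc, hGc]
  exact le_csSup (bdd _) hmem

lemma pow_le (n₀ : ℕ) (h₀ : 1 ≤ n₀) : ∀ q s : ℕ, 1 ≤ s → RP n₀ ^ q ≤ RP (q * n₀ + s) := by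
  intro q
  induction q with
  | zero => intro s hs; simpa using one_le_RP s
  | succ q ih =>
    intro s hs
    have h1 : RP n₀ ^ (q + 1) = RP n₀ ^ q * RP n₀ := pow_succ _ _
    have h2 : RP n₀ ^ q * RP n₀ ≤ RP (q * n₀ + s) * RP n₀ :=
      Nat.mul_le_mul_right _ (ih s hs)
    have h3 : RP (q * n₀ + s) * RP n₀ ≤ RP ((q * n₀ + s) + n₀) := supermult _ _
    have h4 : (q * n₀ + s) + n₀ = (q + 1) * n₀ + s := by ring
    rw [h1, ← h4]
    exact le_trans h2 h3

lemma RP_lower (n₀ n : ℕ) (h₀ : 1 ≤ n₀) (hn : 2 * n₀ ≤ n) :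
    ∃ q : ℕ, n ≤ 2 * (q * n₀) ∧ RP n₀ ^ q ≤ RP n := by
  set q := (n - 1) / n₀ with hq
  set r := (n - 1) % n₀ with hr
  have hd : n₀ * q + r = n - 1 := Nat.div_add_mod _ _
  have hc : n₀ * q = q * n₀ := Nat.mul_comm _ _
  have hrlt : r < n₀ := Nat.mod_lt _ h₀
  have hn1 : 1 ≤ n := by omega
  have hdecomp : n = q * n₀ + (r + 1) := by omega
  refine ⟨q, by omega, ?_⟩
  rw [hdecomp]
  exact pow_le n₀ h₀ q (r + 1) (by omega)

end RPaux

theorem stmt14 :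
    (∀ m n : ℕ, 1 ≤ m → 1 ≤ n → RP m * RP n ≤ RP (m + n)) ∧
    ((¬ ∃ C : ℝ, ∀ n : ℕ, 1 ≤ n → ((RP n : ℝ)) ^ ((1 : ℝ) / n) ≤ C) →
      Filter.Tendsto (fun n : ℕ => ((RP n : ℝ)) ^ ((1 : ℝ) / n)) Filter.atTop
        Filter.atTop) := by
  constructor
  · exact fun m n _ _ => RPaux.supermult m n
  · intro hub
    push_neg at hub
    rw [Filter.tendsto_atTop]
    intro M
    set M' := max M 1 with hM'
    have hM'1 : (1 : ℝ) ≤ M' := le_max_right _ _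
    have hM'0 : (0 : ℝ) ≤ M' := by linarith
    obtain ⟨n₀, hn₀1, hn₀⟩ := hub (M' ^ 2)
    rw [Filter.eventually_atTop]
    refine ⟨2 * n₀, fun n hn => ?_⟩
    obtain ⟨q, hq1, hq2⟩ := RPaux.RP_lower n₀ n hn₀1 hn
    have hn1 : 1 ≤ n := by omega
    have hnpos : (0 : ℝ) < n := by exact_mod_cast hn1
    have hn₀pos : (0 : ℝ) < n₀ := by exact_mod_cast hn₀1
    -- (M'^2)^n₀ ≤ RP n₀
    have hRP0 : (0 : ℝ) ≤ (RP n₀ : ℝ) := Nat.cast_nonneg _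
    have step1 : (M' ^ 2 : ℝ) ^ (n₀ : ℕ) ≤ (RP n₀ : ℝ) := by
      have h := Real.rpow_le_rpow (by positivity) hn₀.le (Nat.cast_nonneg n₀)
      rw [← Real.rpow_natCast (M' ^ 2) n₀]
      calc (M' ^ 2 : ℝ) ^ (n₀ : ℝ) ≤ ((RP n₀ : ℝ) ^ ((1:ℝ)/n₀)) ^ (n₀ : ℝ) := h
        _ = (RP n₀ : ℝ) ^ (((1:ℝ)/n₀) * n₀) := by
              rw [← Real.rpow_mul hRP0]
        _ = (RP n₀ : ℝ) := by
              rw [one_div, inv_mul_cancel₀ (ne_of_gt hn₀pos), Real.rpow_one]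
    -- M' ^ (2*(q*n₀)) ≤ RP n
    have step2 : (M' : ℝ) ^ (2 * (q * n₀)) ≤ (RP n : ℝ) := by
      have e1 : (M' : ℝ) ^ (2 * (q * n₀)) = ((M' ^ 2) ^ (n₀ : ℕ)) ^ q := by
        rw [← pow_mul, ← pow_mul]; ring_nf
      have e2 : ((M' ^ 2 : ℝ) ^ (n₀ : ℕ)) ^ q ≤ (RP n₀ : ℝ) ^ q :=
        pow_le_pow_left₀ (by positivity) step1 q
      have e3 : ((RP n₀ : ℝ)) ^ q ≤ (RP n : ℝ) := by
        exact_mod_cast hq2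
      calc (M' : ℝ) ^ (2 * (q * n₀)) = ((M' ^ 2) ^ (n₀ : ℕ)) ^ q := e1
        _ ≤ (RP n₀ : ℝ) ^ q := e2
        _ ≤ (RP n : ℝ) := e3
    -- conclude
    set k : ℕ := 2 * (q * n₀) with hk
    have hkn : (n : ℝ) ≤ (k : ℝ) := by exact_mod_cast hq1
    have final : M' ≤ (RP n : ℝ) ^ ((1:ℝ)/n) := by
      have h1 : ((M' : ℝ) ^ k) ^ ((1:ℝ)/n) ≤ (RP n : ℝ) ^ ((1:ℝ)/n) :=
        Real.rpow_le_rpow (by positivity) step2 (by positivity)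
      have h2 : ((M' : ℝ) ^ k) ^ ((1:ℝ)/n) = M' ^ ((k : ℝ) * ((1:ℝ)/n)) := by
        rw [← Real.rpow_natCast M' k, ← Real.rpow_mul hM'0]
      have h3 : (1 : ℝ) ≤ (k : ℝ) * ((1:ℝ)/n) := by
        rw [mul_one_div, le_div_iff₀ hnpos, one_mul]
        exact hkn
      have h4 : M' ≤ M' ^ ((k : ℝ) * ((1:ℝ)/n)) := by
        nth_rewrite 1 [← Real.rpow_one M']
        exact Real.rpow_le_rpow_of_exponent_le hM'1 h3
      calc M' ≤ M' ^ ((k : ℝ) * ((1:ℝ)/n)) := h4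
        _ = ((M' : ℝ) ^ k) ^ ((1:ℝ)/n) := h2.symm
        _ ≤ (RP n : ℝ) ^ ((1:ℝ)/n) := h1
    exact le_trans (le_max_left M 1) final
end
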